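/- arXiv:0907.3801 — 3 statements merged into one kernel-verified Lean document; each statement's English description precedes it below -/
import Mathlib

section
/- For all integers m, n ≥ 3, the incidence chromatic number of the toroidal grid T_{m,n} = C_m □ C_n is at most 6 (in particular, toroidal grids satisfy the Incidence Coloring Conjecture bound Δ + 2). -/
/-!
An incidence `(v, e)` is the arc from `v` to the other end of `e`, and an incidence coloring is
an arc coloring in which the arcs leaving a vertex get distinct colors and no arc `u → v` has
the color of an arc `v → w`. Label every cycle `C_m` by a closed walk of length `m` in a fixed
digraph on six labels; it has closed walks of lengths 3, 4 and 5 through `0`, hence of every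
length `m ≥ 3`. An arc of the torus is colored by a fixed table according to its direction and
the labels of its tail. Whether the arcs at a vertex are properly colored only depends on the
labels of the vertex and its four neighbors, so properness is a finite check.
-/

open SimpleGraph

/-- The type of incidences of a graph `G`: pairs `(v, e)` where `e` is an edge of `G`
incident to the vertex `v`. -/
def Incidence {V : Type*} (G : SimpleGraph V) : Type _ :=
  {p : V × Sym2 V // p.2 ∈ G.edgeSet ∧ p.1 ∈ p.2}

/-- The graph on the incidences of `G` in which two distinct incidences `(v,e)` and `(w,f)`
are adjacent iff `v = w`, or `e = f`, or the edge `vw` equals `e` or `f`. -/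
def incidenceGraph {V : Type*} (G : SimpleGraph V) : SimpleGraph (Incidence G) where
  Adj i j := i ≠ j ∧
    (i.1.1 = j.1.1 ∨ i.1.2 = j.1.2 ∨ s(i.1.1, j.1.1) = i.1.2 ∨ s(i.1.1, j.1.1) = j.1.2)
  symm := ⟨by
    rintro ⟨⟨v, e⟩, hi⟩ ⟨⟨w, f⟩, hj⟩ ⟨hne, h⟩
    refine ⟨fun h' => hne h'.symm, ?_⟩
    simp only at h ⊢
    rcases h with h | h | h | h
    · exact Or.inl h.symm
    · exact Or.inr (Or.inl h.symm)
    · exact Or.inr (Or.inr (Or.inr ((Sym2.eq_swap).trans h)))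
    · exact Or.inr (Or.inr (Or.inl ((Sym2.eq_swap).trans h)))⟩
  loopless := ⟨fun i h => h.1 rfl⟩

/-- The incidence chromatic number of a graph: the least number of colors in a proper
coloring of its incidences. -/
noncomputable def incidenceChromaticNumber {V : Type*} (G : SimpleGraph V) : ℕ∞ :=
  (incidenceGraph G).chromaticNumber

/-- The square of a graph `G`: distinct vertices are adjacent iff they are at distance
at most 2 in `G`. -/
def SimpleGraph.square {V : Type*} (G : SimpleGraph V) : SimpleGraph V where
  Adj u v := u ≠ v ∧ (G.Adj u v ∨ ∃ w, G.Adj u w ∧ G.Adj w v)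
  symm := ⟨by
    rintro u v ⟨hne, h | ⟨w, h1, h2⟩⟩
    · exact ⟨hne.symm, Or.inl h.symm⟩
    · exact ⟨hne.symm, Or.inr ⟨w, h2.symm, h1.symm⟩⟩⟩
  loopless := ⟨fun v h => h.1 rfl⟩

/-- The toroidal grid `T_{m,n} = C_m □ C_n`. -/
def toroidalGrid (m n : ℕ) : SimpleGraph (Fin m × Fin n) :=
  SimpleGraph.boxProd (SimpleGraph.cycleGraph m) (SimpleGraph.cycleGraph n)

namespace Incidence

variable {V : Type*} {G : SimpleGraph V}

noncomputable def head (i : Incidence G) : V :=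
  Sym2.Mem.other i.2.2

lemma mk_head (i : Incidence G) : s(i.1.1, i.head) = i.1.2 :=
  Sym2.other_spec i.2.2

lemma adj_head (i : Incidence G) : G.Adj i.1.1 i.head := by
  rw [← mem_edgeSet, mk_head]
  exact i.2.1

end Incidence

theorem incidenceChromaticNumber_le_of_arc_coloring {V α : Type*} [Fintype α]
    (G : SimpleGraph V) (c : V → V → α)
    (h_out : ∀ ⦃u v w⦄, G.Adj u v → G.Adj u w → v ≠ w → c u v ≠ c u w)
    (h_path : ∀ ⦃u v w⦄, G.Adj u v → G.Adj v w → c u v ≠ c v w) :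
    incidenceChromaticNumber G ≤ Fintype.card α := by
  refine (Coloring.colorable (Coloring.mk (fun i => c i.1.1 i.head) ?_)).chromaticNumber_le
  rintro i j ⟨hij, h | h | h | h⟩
  · have hhead : i.head ≠ j.head := fun hh =>
      hij (Subtype.ext (Prod.ext h (by rw [← i.mk_head, ← j.mk_head, h, hh])))
    simpa only [h] using h_out (h ▸ i.adj_head) j.adj_head hhead
  · rw [← i.mk_head, ← j.mk_head, Sym2.eq_iff] at h
    obtain ⟨hv, hh⟩ | ⟨hv, hh⟩ := h
    · exact absurd (Subtype.ext (Prod.ext hv (by rw [← i.mk_head, ← j.mk_head, hv, hh]))) hij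
    · simpa only [← hv, ← hh] using h_path i.adj_head i.adj_head.symm
  · rw [← i.mk_head, Sym2.congr_right] at h
    simpa only [h] using h_path i.adj_head (h ▸ j.adj_head)
  · rw [← j.mk_head, Sym2.eq_swap, Sym2.congr_right] at h
    simpa only [h] using (h_path j.adj_head (h ▸ i.adj_head)).symm

theorem List.IsChain.exists_fin_rel_add_one {L : Type*} {R : L → L → Prop} {l : List L} {k : ℕ}
    (hlen : l.length = k + 3) (hl : l.IsChain R) (hcyc : ∀ x ∈ l.getLast?, ∀ y ∈ l.head?, R x y) :
    ∃ ℓ : Fin (k + 3) → L, ∀ i, R (ℓ i) (ℓ (i + 1)) := by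
  refine ⟨fun i => l[i.val], fun i => ?_⟩
  by_cases hi : i = Fin.last (k + 2)
  · have hne : l ≠ [] := List.ne_nil_of_length_pos (by omega)
    subst hi
    simpa [Fin.last_add_one, List.getLast_eq_getElem, List.head_eq_getElem, hlen] using
      hcyc _ (List.getLast?_eq_some_getLast hne) _ (List.head?_eq_some_head hne)
  · simp only [Fin.val_add_one_of_lt (Fin.lt_last_iff_ne_last.2 hi)]
    exact List.isChain_iff_getElem.1 hl _ _

section Torus

variable {L α : Type*} {k l : ℕ}

lemma Fin.add_one_add_one_ne_self (a : Fin (k + 3)) : a + 1 + 1 ≠ a := by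
  rw [add_assoc, Ne, add_eq_left, Fin.ext_iff, Fin.val_add, Fin.val_one, Fin.val_zero,
    Nat.mod_eq_of_lt (by omega)]
  omega

lemma Fin.add_one_ne_sub_one (a : Fin (k + 3)) : a + 1 ≠ a - 1 := fun h =>
  a.add_one_add_one_ne_self (by rw [h, sub_add_cancel])

lemma cycleGraph_adj_iff_eq_add_one_or_eq_sub_one {a b : Fin (k + 3)} :
    (cycleGraph (k + 3)).Adj a b ↔ b = a + 1 ∨ b = a - 1 := by
  rw [cycleGraph_adj (n := k + 1), or_comm, sub_eq_iff_eq_add', sub_eq_iff_eq_add',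
    eq_sub_iff_add_eq, eq_comm (a := a)]

def torusNeighbor (v : Fin (k + 3) × Fin (l + 3)) : Fin 4 → Fin (k + 3) × Fin (l + 3) :=
  ![(v.1 + 1, v.2), (v.1 - 1, v.2), (v.1, v.2 + 1), (v.1, v.2 - 1)]

lemma toroidalGrid_adj_iff {v w : Fin (k + 3) × Fin (l + 3)} :
    (toroidalGrid (k + 3) (l + 3)).Adj v w ↔ ∃ d, w = torusNeighbor v d := by
  simp only [toroidalGrid, boxProd_adj, cycleGraph_adj_iff_eq_add_one_or_eq_sub_one,
    torusNeighbor, Prod.ext_iff, Fin.exists_fin_succ, Fin.isValue, Matrix.cons_val_zero,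
    Matrix.cons_val_succ, Matrix.cons_val_fin_one, exists_const]
  tauto

/-- `κ₁ s x y` colors the horizontal arc leaving a vertex with horizontal label `x` and vertical
label `y`, to the right if `s` and to the left otherwise; `κ₂ s y x` colors its vertical arcs. -/
def outColors (κ₁ κ₂ : Bool → L → L → α) (x y : L) : Fin 4 → α :=
  ![κ₁ true x y, κ₁ false x y, κ₂ true y x, κ₂ false y x]

/-- The arcs entering the vertex from the same four directions; its neighbors to the left and
right have horizontal labels `x₀` and `x₂`, those below and above vertical labels `y₀` and `y₂`. -/
def inColors (κ₁ κ₂ : Bool → L → L → α) (x₀ x x₂ y₀ y y₂ : L) : Fin 4 → α :=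
  ![κ₁ false x₂ y, κ₁ true x₀ y, κ₂ false y₂ x, κ₂ true y₀ x]

def IsLocallyProper (R : L → L → Prop) (κ₁ κ₂ : Bool → L → L → α) : Prop :=
  ∀ ⦃x₀ x⦄, R x₀ x → ∀ ⦃x₂⦄, R x x₂ → ∀ ⦃y₀ y⦄, R y₀ y → ∀ ⦃y₂⦄, R y y₂ →
    Function.Injective (outColors κ₁ κ₂ x y) ∧
      ∀ d d', inColors κ₁ κ₂ x₀ x x₂ y₀ y y₂ d ≠ outColors κ₁ κ₂ x y d'

def torusArcColoring (κ₁ κ₂ : Bool → L → L → α) (ℓ₁ : Fin (k + 3) → L) (ℓ₂ : Fin (l + 3) → L)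
    (v w : Fin (k + 3) × Fin (l + 3)) : α :=
  if w.2 = v.2 then κ₁ (w.1 = v.1 + 1) (ℓ₁ v.1) (ℓ₂ v.2) else κ₂ (w.2 = v.2 + 1) (ℓ₂ v.2) (ℓ₁ v.1)

variable (κ₁ κ₂ : Bool → L → L → α) (ℓ₁ : Fin (k + 3) → L) (ℓ₂ : Fin (l + 3) → L)

lemma torusArcColoring_torusNeighbor (v : Fin (k + 3) × Fin (l + 3)) (d : Fin 4) :
    torusArcColoring κ₁ κ₂ ℓ₁ ℓ₂ v (torusNeighbor v d) = outColors κ₁ κ₂ (ℓ₁ v.1) (ℓ₂ v.2) d := by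
  fin_cases d <;>
    simp [torusArcColoring, torusNeighbor, outColors, (Fin.add_one_ne_sub_one _).symm]

lemma torusArcColoring_torusNeighbor_left (v : Fin (k + 3) × Fin (l + 3)) (d : Fin 4) :
    torusArcColoring κ₁ κ₂ ℓ₁ ℓ₂ (torusNeighbor v d) v =
      inColors κ₁ κ₂ (ℓ₁ (v.1 - 1)) (ℓ₁ v.1) (ℓ₁ (v.1 + 1)) (ℓ₂ (v.2 - 1)) (ℓ₂ v.2)
        (ℓ₂ (v.2 + 1)) d := by
  fin_cases d <;> simp [torusArcColoring, torusNeighbor, inColors,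
    (Fin.add_one_add_one_ne_self _).symm, eq_sub_iff_add_eq]

variable {κ₁ κ₂ ℓ₁ ℓ₂} in
theorem incidenceChromaticNumber_toroidalGrid_le [Fintype α] {R : L → L → Prop}
    (hκ : IsLocallyProper R κ₁ κ₂) (h₁ : ∀ i, R (ℓ₁ i) (ℓ₁ (i + 1)))
    (h₂ : ∀ j, R (ℓ₂ j) (ℓ₂ (j + 1))) :
    incidenceChromaticNumber (toroidalGrid (k + 3) (l + 3)) ≤ Fintype.card α := by
  have hloc (v : Fin (k + 3) × Fin (l + 3)) := hκ (by simpa using h₁ (v.1 - 1)) (h₁ v.1)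
    (by simpa using h₂ (v.2 - 1)) (h₂ v.2)
  refine incidenceChromaticNumber_le_of_arc_coloring _ (torusArcColoring κ₁ κ₂ ℓ₁ ℓ₂) ?_ ?_
  · intro u v w huv huw hvw
    obtain ⟨d, rfl⟩ := toroidalGrid_adj_iff.1 huv
    obtain ⟨d', rfl⟩ := toroidalGrid_adj_iff.1 huw
    rw [torusArcColoring_torusNeighbor, torusArcColoring_torusNeighbor]
    exact (hloc u).1.ne (ne_of_apply_ne _ hvw)
  · intro u v w huv hvw
    obtain ⟨d, rfl⟩ := toroidalGrid_adj_iff.1 huv.symm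
    obtain ⟨d', rfl⟩ := toroidalGrid_adj_iff.1 hvw
    rw [torusArcColoring_torusNeighbor_left, torusArcColoring_torusNeighbor]
    exact (hloc v).2 d d'

end Torus

def labelSucc : Fin 6 → List (Fin 6) :=
  ![[1, 3], [2, 5], [3], [4], [0], [4]]

abbrev LabelStep (x y : Fin 6) : Prop :=
  y ∈ labelSucc x

def labelCycle : ℕ → List (Fin 6)
  | 0 => [0, 3, 4]
  | 1 => [0, 1, 5, 4]
  | 2 => [0, 1, 2, 3, 4]
  | k + 3 => labelCycle k ++ [0, 3, 4]

lemma length_labelCycle : ∀ k, (labelCycle k).length = k + 3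
  | 0 | 1 | 2 => rfl
  | k + 3 => by simp [labelCycle, length_labelCycle k]

lemma head?_labelCycle : ∀ k, (labelCycle k).head? = some 0
  | 0 | 1 | 2 => rfl
  | k + 3 => by simp [labelCycle, List.head?_append, head?_labelCycle k]

lemma getLast?_labelCycle (k : ℕ) : (labelCycle k).getLast? = some 4 := by
  rcases k with _ | _ | _ | k <;> simp [labelCycle]

lemma isChain_labelCycle : ∀ k, (labelCycle k).IsChain LabelStep
  | 0 | 1 | 2 => by decide
  | k + 3 => (isChain_labelCycle k).append (by decide) (by simp [getLast?_labelCycle]; decide)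

theorem exists_fin_labelStep_add_one (k : ℕ) :
    ∃ ℓ : Fin (k + 3) → Fin 6, ∀ i, LabelStep (ℓ i) (ℓ (i + 1)) :=
  (isChain_labelCycle k).exists_fin_rel_add_one (length_labelCycle k)
    (by simp [getLast?_labelCycle, head?_labelCycle]; decide)

/-- Found by a SAT solver. -/
def gridColor : Bool → Fin 6 → Fin 6 → Fin 6
  | true => ![![2, 4, 3, 3, 5, 3], ![3, 0, 5, 0, 2, 2], ![2, 4, 1, 3, 4, 3],
      ![5, 2, 5, 2, 0, 1], ![0, 1, 0, 5, 2, 4], ![5, 2, 4, 2, 3, 1]]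
  | false => ![![4, 2, 4, 1, 0, 1], ![0, 5, 0, 4, 1, 0], ![4, 1, 3, 1, 5, 4],
      ![3, 5, 2, 4, 1, 0], ![1, 0, 3, 0, 4, 2], ![2, 4, 2, 1, 0, 3]]

theorem gridColor_isLocallyProper :
    IsLocallyProper LabelStep gridColor fun s y x => gridColor s y x + 3 := by
  unfold IsLocallyProper outColors inColors
  decide

theorem incidence_chromatic_toroidal_grid_le_six (m n : ℕ) (hm : 3 ≤ m) (hn : 3 ≤ n) :
    incidenceChromaticNumber (toroidalGrid m n) ≤ 6 := by
  obtain ⟨k, rfl⟩ := Nat.exists_eq_add_of_le' hm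
  obtain ⟨l, rfl⟩ := Nat.exists_eq_add_of_le' hn
  obtain ⟨ℓ₁, h₁⟩ := exists_fin_labelStep_add_one k
  obtain ⟨ℓ₂, h₂⟩ := exists_fin_labelStep_add_one l
  simpa using incidenceChromaticNumber_toroidalGrid_le gridColor_isLocallyProper h₁ h₂
end

section
/- For every integer k ≥ 1 and every even integer n ≥ 3, the chromatic number of the square of the toroidal grid satisfies χ(T_{3k,n}²) ≤ 6. -/
/-!
Colour the vertex `(i, j)` of `C_{3k} □ C_{2L}` by `(i + c ⌊j / 2⌋ mod 3, j mod 2)`, where `c` is a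
proper 3-colouring of the cycle `C_L`. A vertical step changes the parity of `j`. One or two
horizontal steps change `i mod 3` by `±1` or `±2` (well defined around the cycle since `3 ∣ 3k`).
Two vertical steps that do not return keep the parity of `j` and move `⌊j / 2⌋` to an adjacent
vertex of `C_L`, where `c` changes.
-/

open SimpleGraph

theorem square_boxProd_colorable {V W A β : Type*} {G : SimpleGraph V} {H : SimpleGraph W}
    [Add A] [IsCancelAdd A] [Fintype A] [Fintype β] (a : G.square.Coloring A) (p : H.Coloring β)
    (b : W → A) (hb : ∀ ⦃w x w'⦄, H.Adj w x → H.Adj x w' → w ≠ w' → b w ≠ b w') :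
    (G □ H).square.Colorable (Fintype.card A * Fintype.card β) := by
  rw [← Fintype.card_prod]
  refine (Coloring.mk (fun x => (a x.1 + b x.2, p x.2)) ?_).colorable
  rintro ⟨v, w⟩ ⟨v', w'⟩ ⟨hne, hadj | ⟨⟨v₁, w₁⟩, h₁, h₂⟩⟩ heq
  all_goals simp only [Ne, boxProd_adj, Prod.mk.injEq] at *
  · rcases hadj with ⟨hG, rfl⟩ | ⟨hH, -⟩
    · exact a.valid ⟨fun h => hne ⟨h, rfl⟩, Or.inl hG⟩ (add_right_cancel heq.1)
    · exact p.valid hH heq.2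
  · rcases h₁ with ⟨hG₁, rfl⟩ | ⟨hH₁, rfl⟩ <;> rcases h₂ with ⟨hG₂, rfl⟩ | ⟨hH₂, rfl⟩
    · exact a.valid ⟨fun h => hne ⟨h, rfl⟩, Or.inr ⟨v₁, hG₁, hG₂⟩⟩ (add_right_cancel heq.1)
    · exact p.valid hH₂ heq.2
    · exact p.valid hH₁ heq.2
    · exact hb hH₁ hH₂ (fun h => hne ⟨rfl, h⟩) (add_left_cancel heq.1)

section Cycle

variable {m : ℕ} [NeZero m]

theorem eq_add_one_or_eq_add_one_of_cycleGraph_adj {u v : Fin m} (h : (cycleGraph m).Adj u v) :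
    v = u + 1 ∨ u = v + 1 := by
  obtain _ | _ | m := m
  · exact absurd rfl (NeZero.ne 0)
  · exact (cycleGraph_one_adj h).elim
  · rw [cycleGraph_adj, sub_eq_iff_eq_add', sub_eq_iff_eq_add'] at h
    exact h.symm

theorem cycleGraph_adj_add_one (hm : 2 ≤ m) (u : Fin m) : (cycleGraph m).Adj u (u + 1) := by
  obtain _ | _ | m := m
  · omega
  · omega
  · exact cycleGraph_adj.mpr (Or.inr (add_sub_cancel_left u 1))

theorem eq_or_eq_add_one_add_one_of_cycleGraph_adj_adj {u w v : Fin m}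
    (h₁ : (cycleGraph m).Adj u w) (h₂ : (cycleGraph m).Adj w v) :
    u = v ∨ v = u + 1 + 1 ∨ u = v + 1 + 1 := by
  rcases eq_add_one_or_eq_add_one_of_cycleGraph_adj h₁ with rfl | rfl <;>
    rcases eq_add_one_or_eq_add_one_of_cycleGraph_adj h₂ with rfl | h
  · exact Or.inr (Or.inl rfl)
  · exact Or.inl (add_right_cancel h)
  · exact Or.inl rfl
  · exact Or.inr (Or.inr (by rw [h]))

theorem Fin.natCast_val_add_one_of_dvd {d : ℕ} (hd : d ∣ m) (i : Fin m) :
    (((i + 1 : Fin m).val : ℕ) : ZMod d) = i.val + 1 := by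
  have hmod (x : ℕ) : ((x % m : ℕ) : ZMod d) = x :=
    (ZMod.natCast_eq_natCast_iff' _ _ _).2 (Nat.mod_mod_of_dvd x hd)
  rw [Fin.val_add, hmod, Fin.val_one', Nat.cast_add, hmod, Nat.cast_one]

theorem natCast_val_ne_of_cycleGraph_adj {d : ℕ} (hd : 2 ≤ d) (h : d ∣ m) {u v : Fin m}
    (huv : (cycleGraph m).Adj u v) : (u.val : ZMod d) ≠ v.val := by
  have : Fact (1 < d) := ⟨hd⟩
  have step (i : Fin m) : (((i + 1 : Fin m).val : ℕ) : ZMod d) ≠ i.val := by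
    rw [Fin.natCast_val_add_one_of_dvd h, Ne, add_eq_left]
    exact one_ne_zero
  rcases eq_add_one_or_eq_add_one_of_cycleGraph_adj huv with rfl | rfl
  exacts [(step _).symm, step _]

theorem cycleGraph_colorable_of_dvd {d : ℕ} (hd : 2 ≤ d) (h : d ∣ m) :
    (cycleGraph m).Colorable d := by
  have : NeZero d := ⟨by omega⟩
  exact ZMod.card d ▸ (Coloring.mk (fun i => (i.val : ZMod d))
    (natCast_val_ne_of_cycleGraph_adj hd h)).colorable

theorem square_cycleGraph_colorable_of_dvd {d : ℕ} (hd : 3 ≤ d) (h : d ∣ m) :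
    (cycleGraph m).square.Colorable d := by
  have : NeZero d := ⟨by omega⟩
  have two_steps (i : Fin m) : (((i + 1 + 1 : Fin m).val : ℕ) : ZMod d) ≠ i.val := by
    rw [Fin.natCast_val_add_one_of_dvd h, Fin.natCast_val_add_one_of_dvd h, Ne, add_assoc,
      add_eq_left, one_add_one_eq_two, ← Nat.cast_ofNat, ZMod.natCast_eq_zero_iff]
    exact fun h2 => by have := Nat.le_of_dvd two_pos h2; omega
  refine ZMod.card d ▸ (Coloring.mk (fun i => (i.val : ZMod d)) fun huv => ?_).colorable
  obtain ⟨hne, huv | ⟨w, h₁, h₂⟩⟩ := huv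
  · exact natCast_val_ne_of_cycleGraph_adj (by omega) h huv
  · rcases eq_or_eq_add_one_add_one_of_cycleGraph_adj_adj h₁ h₂ with h | rfl | rfl
    exacts [absurd h hne, (two_steps _).symm, two_steps _]

end Cycle

theorem cycleGraph_colorable_three {L : ℕ} (hL : 2 ≤ L) : (cycleGraph L).Colorable 3 := by
  have : NeZero L := ⟨by omega⟩
  -- `s mod 3` clashes across the edge `{L - 1, 0}` exactly when `L ≡ 1 mod 3`; then vertex
  -- `L - 1` gets colour `1` instead (its other neighbour `L - 2` has colour `2`).
  let g (s : ℕ) : ℕ := if s + 1 = L ∧ L % 3 = 1 then 1 else s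
  have g_succ_ne (s : ℕ) (hs : s < L) : g ((s + 1) % L) % 3 ≠ g s % 3 := by
    rcases (by omega : s + 1 < L ∨ s + 1 = L) with h | rfl
    · rw [Nat.mod_eq_of_lt h]
      simp only [g]
      split_ifs <;> omega
    · rw [Nat.mod_self]
      simp only [g, true_and]
      split_ifs <;> omega
  have color_add_one_ne (t : Fin L) : (g (t + 1 : Fin L).val : ZMod 3) ≠ g t.val := by
    rw [Fin.val_add, Fin.val_one', Nat.add_mod_mod, Ne, ZMod.natCast_eq_natCast_iff']
    exact g_succ_ne t.val t.isLt
  refine ZMod.card 3 ▸ (Coloring.mk (fun t => (g t.val : ZMod 3)) fun huv => ?_).colorable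
  rcases eq_add_one_or_eq_add_one_of_cycleGraph_adj huv with rfl | rfl
  exacts [(color_add_one_ne _).symm, color_add_one_ne _]

theorem Fin.divNat_add_one_add_one {L : ℕ} [NeZero L] (j : Fin (L * 2)) :
    (j + 1 + 1).divNat = j.divNat + 1 := by
  obtain rfl | hL := (Nat.one_le_iff_ne_zero.mpr (NeZero.ne L)).eq_or_lt
  · exact Subsingleton.elim _ _
  have h1 : 1 % (L * 2) = 1 := Nat.mod_eq_of_lt (by omega)
  have h1' : 1 % L = 1 := Nat.mod_eq_of_lt hL
  have hj := j.isLt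
  ext
  simp only [Fin.coe_divNat, Fin.val_add, Fin.val_one', h1, h1']
  rcases (by omega : j.val + 2 < L * 2 ∨ j.val + 2 = L * 2 ∨ j.val + 1 = L * 2) with h | h | h
  · rw [Nat.mod_eq_of_lt (by omega : j.val + 1 < L * 2), Nat.mod_eq_of_lt h,
      Nat.mod_eq_of_lt (by omega : j.val / 2 + 1 < L)]
    omega
  · rw [Nat.mod_eq_of_lt (by omega : j.val + 1 < L * 2), h, Nat.mod_self,
      (by omega : j.val / 2 + 1 = L), Nat.mod_self]
  · rw [h, Nat.mod_self, (by omega : j.val / 2 + 1 = L), Nat.mod_self, Nat.zero_add, h1]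

theorem cycleGraph_adj_divNat_of_adj_adj {L : ℕ} (hL : 2 ≤ L) {u w v : Fin (L * 2)}
    (h₁ : (cycleGraph (L * 2)).Adj u w) (h₂ : (cycleGraph (L * 2)).Adj w v) (huv : u ≠ v) :
    (cycleGraph L).Adj u.divNat v.divNat := by
  have : NeZero L := ⟨by omega⟩
  rcases eq_or_eq_add_one_add_one_of_cycleGraph_adj_adj h₁ h₂ with h | rfl | rfl
  · exact absurd h huv
  · rw [Fin.divNat_add_one_add_one]
    exact cycleGraph_adj_add_one hL _
  · rw [Fin.divNat_add_one_add_one]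
    exact (cycleGraph_adj_add_one hL _).symm

theorem chromatic_square_toroidal_grid_three_k (k n : ℕ) (hk : 1 ≤ k) (hn : 3 ≤ n)
    (hne : Even n) :
    (toroidalGrid (3 * k) n).square.chromaticNumber ≤ 6 := by
  have : NeZero (3 * k) := ⟨by omega⟩
  obtain ⟨L, rfl⟩ : ∃ L, n = L * 2 := ⟨n / 2, (Nat.div_mul_cancel hne.two_dvd).symm⟩
  have : NeZero (L * 2) := ⟨by omega⟩
  obtain ⟨a⟩ := square_cycleGraph_colorable_of_dvd le_rfl (dvd_mul_right 3 k)
  obtain ⟨p⟩ := cycleGraph_colorable_of_dvd le_rfl (dvd_mul_left 2 L)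
  obtain ⟨c⟩ := cycleGraph_colorable_three (by omega : 2 ≤ L)
  have := square_boxProd_colorable a p (fun j => c j.divNat)
    fun _ _ _ h₁ h₂ huv => c.valid (cycleGraph_adj_divNat_of_adj_adj (by omega) h₁ h₂ huv)
  rw [toroidalGrid]
  simpa using this.chromaticNumber_le
end

section
/- For every integer k ≥ 1 and every integer n ≥ 3, the incidence chromatic number of the toroidal grid satisfies χ_i(T_{3k,n}) ≤ 6. -/
open SimpleGraph

/-!
An incidence colouring is the same as a colouring of the darts (arcs) `v → u` in which darts with
a common tail get distinct colours and no dart `v → u` shares its colour with a dart leaving `u`.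
On `C_{3k} □ C_n` we colour a dart by its direction (`x ± 1` along `C_{3k}`, `y ± 1` along `C_n`),
by the residue of `x` mod `3`, and by a column pattern attached to `y`. The conditions then only
involve consecutive columns, so a valid cyclic sequence of `n` patterns is a closed walk of length
`n` in a finite "compatibility" digraph on patterns. Closed walks of lengths `3`, `4` and `5`
through one pattern are found by computation, and concatenating them gives every length `n ≥ 3`.
-/

namespace Incidence

variable {V : Type*} {G : SimpleGraph V}

noncomputable def toDart (i : Incidence G) : G.Dart :=
  ⟨(i.1.1, Sym2.Mem.other i.2.2), by
    rw [← mem_edgeSet, Sym2.other_spec]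
    exact i.2.1⟩

theorem toDart_edge (i : Incidence G) : i.toDart.edge = i.1.2 :=
  Sym2.other_spec i.2.2

theorem toDart_injective : Function.Injective (toDart : Incidence G → G.Dart) := by
  intro i j h
  have hfst : i.1.1 = j.1.1 := congrArg (·.fst) h
  have hedge : i.1.2 = j.1.2 := by rw [← toDart_edge, ← toDart_edge, h]
  exact Subtype.ext (Prod.ext hfst hedge)

theorem toDart_of_adj {i j : Incidence G} (h : (incidenceGraph G).Adj i j) :
    (i.toDart.fst = j.toDart.fst ∧ i.toDart ≠ j.toDart) ∨ i.toDart.snd = j.toDart.fst ∨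
      j.toDart.snd = i.toDart.fst := by
  obtain ⟨hne, h⟩ := h
  have hi : i.1.2 = s(i.toDart.fst, i.toDart.snd) := (toDart_edge i).symm
  have hj : j.1.2 = s(j.toDart.fst, j.toDart.snd) := (toDart_edge j).symm
  have hne' : i.toDart ≠ j.toDart := toDart_injective.ne hne
  change i.toDart.fst = j.toDart.fst ∨ _ ∨ s(i.toDart.fst, j.toDart.fst) = _ ∨
    s(i.toDart.fst, j.toDart.fst) = _ at h
  rw [hi, hj] at h
  rcases h with h | h | h | h
  · exact Or.inl ⟨h, hne'⟩
  · rcases Sym2.eq_iff.mp h with ⟨h, -⟩ | ⟨-, h⟩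
    · exact Or.inl ⟨h, hne'⟩
    · exact Or.inr (Or.inl h)
  · exact Or.inr (Or.inl (Sym2.congr_right.mp h).symm)
  · rw [Sym2.eq_swap] at h
    exact Or.inr (Or.inr (Sym2.congr_right.mp h).symm)

end Incidence

theorem incidenceChromaticNumber_le_of_dart {V α : Type*} [Fintype α] (G : SimpleGraph V)
    (c : G.Dart → α) (htail : ∀ d₁ d₂ : G.Dart, d₁.fst = d₂.fst → c d₁ = c d₂ → d₁ = d₂)
    (hhead : ∀ d₁ d₂ : G.Dart, d₁.snd = d₂.fst → c d₁ ≠ c d₂) :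
    incidenceChromaticNumber G ≤ Fintype.card α := by
  let C : (incidenceGraph G).Coloring α := Coloring.mk (fun i => c i.toDart) fun h => by
    rcases Incidence.toDart_of_adj h with ⟨hfst, hne⟩ | h | h
    · exact fun hc => hne (htail _ _ hfst hc)
    · exact hhead _ _ h
    · exact (hhead _ _ h).symm
  exact C.colorable.chromaticNumber_le

theorem incidenceChromaticNumber_le_of_directions {V D α : Type*} [Fintype α]
    (G : SimpleGraph V) (step : D → V → V) (hstep : ∀ ⦃v u⦄, G.Adj v u → ∃ d, step d v = u)
    (c : V → D → α) (hinj : ∀ v, Function.Injective (c v))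
    (hhead : ∀ v d d', c v d ≠ c (step d v) d') :
    incidenceChromaticNumber G ≤ Fintype.card α := by
  choose dir hdir using hstep
  refine incidenceChromaticNumber_le_of_dart G (fun e => c e.fst (dir e.adj)) ?_ ?_
  · rintro ⟨⟨v, u⟩, huv⟩ ⟨⟨w, z⟩, hwz⟩ (rfl : v = w) hc
    have hu : step (dir huv) v = u := hdir huv
    have hz : step (dir hwz) v = z := hdir hwz
    obtain rfl : u = z := by rw [← hu, ← hz, hinj v hc]
    rfl
  · rintro ⟨⟨v, u⟩, huv⟩ ⟨⟨w, z⟩, hwz⟩ (rfl : u = w)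
    have := hhead v (dir huv) (dir hwz)
    rwa [hdir] at this

section ClosedWalk

variable {α : Type*} {R : α → α → Prop} {a b n : ℕ} {s t : ℕ → α}

def IsClosedWalk (R : α → α → Prop) (n : ℕ) (s : ℕ → α) : Prop :=
  s n = s 0 ∧ ∀ i < n, R (s i) (s (i + 1))

theorem IsClosedWalk.append (hs : IsClosedWalk R a s) (ht : IsClosedWalk R b t)
    (h0 : s 0 = t 0) : IsClosedWalk R (a + b) fun i => if i ≤ a then s i else t (i - a) := by
  refine ⟨?_, fun i hi => ?_⟩
  · rcases Nat.eq_zero_or_pos b with rfl | hb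
    · simpa using hs.1
    · simp [show ¬a + b ≤ a by omega, ht.1, h0]
  · rcases lt_trichotomy i a with hia | rfl | hia
    · simpa [hia.le, Nat.succ_le_of_lt hia] using hs.2 i hia
    · simpa [hs.1, h0] using ht.2 0 (by omega)
    · simpa [show ¬i ≤ a by omega, show ¬i + 1 ≤ a by omega,
        show i + 1 - a = i - a + 1 by omega] using ht.2 (i - a) (by omega)

theorem IsClosedWalk.rel_val_add_one [NeZero n] (hs : IsClosedWalk R n s) (y : Fin n) :
    R (s y) (s (y + 1 : Fin n)) := by
  have hy : ((y + 1 : Fin n) : ℕ) = (y + 1) % n := by simp [Fin.val_add]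
  rcases (show (y : ℕ) + 1 ≤ n from y.isLt).lt_or_eq with h | h
  · rw [hy, Nat.mod_eq_of_lt h]
    exact hs.2 y y.isLt
  · have hy0 : ((y + 1 : Fin n) : ℕ) = 0 := by rw [hy, h, Nat.mod_self]
    have := hs.2 y y.isLt
    rwa [h, hs.1, ← hy0] at this

end ClosedWalk

/-- `c x d` is the colour of the dart leaving vertex `x` of a column in direction `d`:
`0` towards `x + 1`, `1` towards `x - 1`, `2` to the next column, `3` to the previous one. -/
abbrev Column (p : ℕ) (α : Type*) := Fin p → Fin 4 → α

namespace Column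

variable {p : ℕ} [NeZero p] {α : Type*}

def IsProper (c : Column p α) : Prop :=
  ∀ x, Function.Injective (c x) ∧ ∀ d, c x 0 ≠ c (x + 1) d ∧ c (x + 1) 1 ≠ c x d

def Compatible (c c' : Column p α) : Prop :=
  ∀ x d, c x 2 ≠ c' x d ∧ c' x 3 ≠ c x d

def CanPrecede (c c' : Column p α) : Prop :=
  c.IsProper ∧ c.Compatible c'

instance [DecidableEq α] : DecidableRel (CanPrecede : Column p α → Column p α → Prop) :=
  fun c c' => by unfold CanPrecede IsProper Compatible; infer_instance

def C0 : Column 3 (Fin 6) := ![![2, 4, 3, 5], ![4, 0, 5, 1], ![0, 2, 1, 3]]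
def C1 : Column 3 (Fin 6) := ![![4, 0, 5, 1], ![0, 2, 1, 3], ![2, 4, 3, 5]]
def C2 : Column 3 (Fin 6) := ![![0, 2, 1, 3], ![2, 4, 3, 5], ![4, 0, 5, 1]]
def D1 : Column 3 (Fin 6) := ![![0, 5, 4, 1], ![1, 2, 4, 3], ![3, 0, 2, 4]]
def D2 : Column 3 (Fin 6) := ![![5, 0, 2, 3], ![2, 1, 3, 0], ![4, 5, 3, 1]]
def D3 : Column 3 (Fin 6) := ![![3, 0, 1, 4], ![0, 5, 2, 4], ![5, 1, 4, 2]]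
def E1 : Column 3 (Fin 6) := ![![2, 1, 5, 0], ![1, 4, 0, 3], ![3, 2, 0, 5]]
def E2 : Column 3 (Fin 6) := ![![0, 4, 2, 3], ![4, 1, 5, 2], ![5, 3, 2, 1]]
def E3 : Column 3 (Fin 6) := ![![4, 1, 0, 5], ![2, 3, 1, 0], ![3, 5, 0, 4]]
def E4 : Column 3 (Fin 6) := ![![4, 3, 1, 2], ![3, 0, 2, 5], ![5, 1, 4, 2]]

theorem exists_isClosedWalk {n : ℕ} (hn : 3 ≤ n) :
    ∃ s : ℕ → Column 3 (Fin 6), s 0 = C0 ∧ IsClosedWalk CanPrecede n s := by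
  have h3 : IsClosedWalk CanPrecede 3 ([C0, C1, C2].getD · C0) := ⟨rfl, by decide⟩
  induction n using Nat.strong_induction_on with
  | _ n ih =>
    by_cases hn6 : n < 6
    · interval_cases n
      · exact ⟨_, rfl, h3⟩
      · exact ⟨([C0, D1, D2, D3].getD · C0), rfl, rfl, by decide⟩
      · exact ⟨([C0, E1, E2, E3, E4].getD · C0), rfl, rfl, by decide⟩
    · obtain ⟨s, hs0, hs⟩ := ih (n - 3) (by omega) (by omega)
      have hsn := hs.append h3 hs0
      rw [Nat.sub_add_cancel (by omega)] at hsn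
      exact ⟨_, by simpa using hs0, hsn⟩

end Column

section Torus

variable {m n : ℕ} [NeZero m] [NeZero n]

theorem eq_add_one_or_of_cycleGraph_adj {a b : Fin m} (h : (cycleGraph m).Adj a b) :
    b = a + 1 ∨ a = b + 1 := by
  obtain _ | _ | m := m
  · exact a.elim0
  · exact (cycleGraph_one_adj h).elim
  · rcases cycleGraph_adj.mp h with h | h
    · exact Or.inr (sub_eq_iff_eq_add.mp h ▸ add_comm _ _)
    · exact Or.inl (sub_eq_iff_eq_add.mp h ▸ add_comm _ _)

theorem Fin.ofNat_val_add_one_of_dvd {p : ℕ} [NeZero p] (h : p ∣ m) (x : Fin m) :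
    Fin.ofNat p (x + 1 : Fin m) = Fin.ofNat p x + 1 := by
  ext
  simp [Fin.val_add, Nat.mod_mod_of_dvd _ h, Nat.add_mod]

def torusStep : Fin 4 → Fin m × Fin n → Fin m × Fin n :=
  ![fun v => (v.1 + 1, v.2), fun v => (v.1 - 1, v.2), fun v => (v.1, v.2 + 1),
    fun v => (v.1, v.2 - 1)]

theorem toroidalGrid_exists_torusStep {v u : Fin m × Fin n} (h : (toroidalGrid m n).Adj v u) :
    ∃ d, torusStep d v = u := by
  rcases boxProd_adj.mp h with ⟨h, h2⟩ | ⟨h, h1⟩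
  · rcases eq_add_one_or_of_cycleGraph_adj h with h1 | h1
    · exact ⟨0, Prod.ext h1.symm h2⟩
    · exact ⟨1, Prod.ext (eq_sub_of_add_eq h1.symm).symm h2⟩
  · rcases eq_add_one_or_of_cycleGraph_adj h with h2 | h2
    · exact ⟨2, Prod.ext h1 h2.symm⟩
    · exact ⟨3, Prod.ext h1 (eq_sub_of_add_eq h2.symm).symm⟩

theorem incidenceChromaticNumber_toroidalGrid_le_s12 {p : ℕ} [NeZero p] {α : Type*} [Fintype α]
    (hm : p ∣ m) {s : ℕ → Column p α} (hs : IsClosedWalk Column.CanPrecede n s) :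
    incidenceChromaticNumber (toroidalGrid m n) ≤ Fintype.card α := by
  have hproper (y : Fin n) : (s y).IsProper := (hs.2 y y.isLt).1
  refine incidenceChromaticNumber_le_of_directions (toroidalGrid m n) torusStep
    (fun _ _ => toroidalGrid_exists_torusStep) (fun v => s v.2 (Fin.ofNat p v.1))
    (fun v => (hproper v.2 _).1) ?_
  rintro ⟨x, y⟩ d d'
  fin_cases d
  · show s y (Fin.ofNat p x) 0 ≠ s y (Fin.ofNat p (x + 1 : Fin m)) d'
    rw [Fin.ofNat_val_add_one_of_dvd hm]
    exact ((hproper y _).2 d').1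
  · show s y (Fin.ofNat p x) 1 ≠ s y (Fin.ofNat p (x - 1 : Fin m)) d'
    have := ((hproper y (Fin.ofNat p (x - 1 : Fin m))).2 d').2
    rwa [← Fin.ofNat_val_add_one_of_dvd hm, sub_add_cancel] at this
  · show s y (Fin.ofNat p x) 2 ≠ s (y + 1 : Fin n) (Fin.ofNat p x) d'
    exact ((hs.rel_val_add_one y).2 _ d').1
  · show s y (Fin.ofNat p x) 3 ≠ s (y - 1 : Fin n) (Fin.ofNat p x) d'
    have := ((hs.rel_val_add_one (y - 1)).2 (Fin.ofNat p x) d').2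
    rwa [sub_add_cancel] at this

end Torus

theorem incidence_chromatic_toroidal_grid_three_k (k n : ℕ) (hk : 1 ≤ k) (hn : 3 ≤ n) :
    incidenceChromaticNumber (toroidalGrid (3 * k) n) ≤ 6 := by
  have : NeZero (3 * k) := ⟨by omega⟩
  have : NeZero n := ⟨by omega⟩
  obtain ⟨s, -, hs⟩ := Column.exists_isClosedWalk hn
  simpa using incidenceChromaticNumber_toroidalGrid_le_s12 (Dvd.intro k rfl) hs
end
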